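/- The polytope P = {m ∈ ℝ³ : ⟨m,u⟩ ≥ -1 for all u ∈ {x₁,x₂,x₃,x₄,y₁,y₂,z₁,z₂}} is bounded and contains an open ball around the origin; in particular, P is a three-dimensional polytope. (This is the anticanonical polytope P_{−K_X} of the toric threefold X in Sato's example; since for a nef torus-invariant divisor D on a complete toric variety the Kodaira dimension κ(D) equals dim P_D, the three-dimensionality shows −K_X is big, so X is a toric weak Fano threefold.) -/
import Mathlib


open Matrix

/-- Ray generators of Sato's fan Δ, viewed in ℝ³. -/
def x₁ : Fin 3 → ℝ := ![1, 0, 1]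
def x₂ : Fin 3 → ℝ := ![0, 1, 0]
def x₃ : Fin 3 → ℝ := ![-1, 3, 0]
def x₄ : Fin 3 → ℝ := ![0, -1, 0]
def y₁ : Fin 3 → ℝ := ![0, 0, 1]
def y₂ : Fin 3 → ℝ := ![0, 0, -1]
def z₁ : Fin 3 → ℝ := ![0, 1, 1]
def z₂ : Fin 3 → ℝ := ![0, 2, 1]

/-- The anticanonical polytope P_{−K_X} of Sato's toric threefold:
all m ∈ ℝ³ with ⟨m,u⟩ ≥ −1 for each of the eight ray generators u. -/
def P : Set (Fin 3 → ℝ) :=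
  {m | ∀ u ∈ ({x₁, x₂, x₃, x₄, y₁, y₂, z₁, z₂} : Set (Fin 3 → ℝ)), -1 ≤ m ⬝ᵥ u}

/-- The polytope P = P_{−K_X} is bounded and contains an open ball around the origin;
in particular it is a three-dimensional polytope, so −K_X is nef and big. -/
theorem sato_anticanonical_polytope_bounded_and_full_dimensional :
    Bornology.IsBounded P ∧ ∃ ε : ℝ, 0 < ε ∧ Metric.ball (0 : Fin 3 → ℝ) ε ⊆ P := by
  constructor
  · apply Metric.isBounded_closedBall (x := (0 : Fin 3 → ℝ)) (r := 4) |>.subset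
    intro m hm
    have h1 := hm x₁ (by simp)
    have h2 := hm x₂ (by simp)
    have h3 := hm x₃ (by simp)
    have h4 := hm x₄ (by simp)
    have h5 := hm y₁ (by simp [P, y₁])
    have h6 := hm y₂ (by simp [P, y₂])
    simp only [x₁, x₂, x₃, x₄, y₁, y₂, dotProduct, Fin.sum_univ_three,
      Matrix.cons_val_zero, Matrix.cons_val_one, Matrix.head_cons,
      Matrix.cons_val_two, Matrix.tail_cons] at h1 h2 h3 h4 h5 h6
    have b0 : |m 0| ≤ 4 := abs_le.mpr ⟨by linarith, by linarith⟩
    have b1 : |m 1| ≤ 4 := abs_le.mpr ⟨by linarith, by linarith⟩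
    have b2 : |m 2| ≤ 4 := abs_le.mpr ⟨by linarith, by linarith⟩
    rw [Metric.mem_closedBall, dist_zero_right]
    rw [pi_norm_le_iff_of_nonneg (by norm_num)]
    intro i
    fin_cases i
    · exact b0
    · exact b1
    · exact b2
  · refine ⟨1/4, by norm_num, fun m hm => ?_⟩
    rw [Metric.mem_ball, dist_zero_right] at hm
    have h : ∀ i, |m i| < 1/4 := fun i =>
      lt_of_le_of_lt (norm_le_pi_norm m i) hm
    have h0 := abs_lt.mp (h 0)
    have h1 := abs_lt.mp (h 1)
    have h2 := abs_lt.mp (h 2)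
    intro u hu
    simp only [Set.mem_insert_iff, Set.mem_singleton_iff] at hu
    rcases hu with rfl|rfl|rfl|rfl|rfl|rfl|rfl|rfl <;>
      simp only [x₁, x₂, x₃, x₄, y₁, y₂, z₁, z₂, dotProduct, Fin.sum_univ_three,
        Matrix.cons_val_zero, Matrix.cons_val_one, Matrix.head_cons,
        Matrix.cons_val_two, Matrix.tail_cons] <;> nlinarith [h0.1, h0.2, h1.1, h1.2, h2.1, h2.2]
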